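/- arXiv:1412.4352 — 3 statements merged into one kernel-verified Lean document; each statement's English description precedes it below -/
import Mathlib

section
/- Let V and H be real Hilbert spaces and let ι : V → H be an injective compact continuous linear operator with dense range. Let a : V × V → ℝ be a bounded bilinear form, i.e. |a(ψ,φ)| ≤ c₁ ‖ψ‖_V ‖φ‖_V for all ψ, φ ∈ V, which is V-coercive: there exist constants c₂ > 0 and k ∈ ℝ such that a(ψ,ψ) + k ‖ι ψ‖²_H ≥ c₂ ‖ψ‖²_V for all ψ ∈ V. Then the set Z = {ψ ∈ V : a(ψ,φ) = 0 for all φ ∈ V} is a finite-dimensional linear subspace of V. -/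
/-- Fredholm-type alternative for `V`-coercive bilinear forms: if `V` embeds compactly,
injectively, continuously and densely into `H` via `ι`, and the bounded bilinear form `a`
satisfies the Gårding inequality `a ψ ψ + k ‖ι ψ‖² ≥ c₂ ‖ψ‖²` with `c₂ > 0`, then the set of
homogeneous solutions `{ψ | ∀ φ, a ψ φ = 0}` is a finite-dimensional linear subspace of `V`. -/
theorem finiteDimensional_homogeneous_solutions_of_coercive
    {V H : Type*}
    [NormedAddCommGroup V] [InnerProductSpace ℝ V] [CompleteSpace V]
    [NormedAddCommGroup H] [InnerProductSpace ℝ H] [CompleteSpace H]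
    (ι : V →L[ℝ] H) (hcompact : IsCompactOperator ι)
    (hinj : Function.Injective ι) (hdense : DenseRange ι)
    (a : V →ₗ[ℝ] V →ₗ[ℝ] ℝ) (c₁ : ℝ)
    (hbdd : ∀ ψ φ : V, |a ψ φ| ≤ c₁ * ‖ψ‖ * ‖φ‖)
    (c₂ : ℝ) (hc₂ : 0 < c₂) (k : ℝ)
    (hcoercive : ∀ ψ : V, a ψ ψ + k * ‖ι ψ‖ ^ 2 ≥ c₂ * ‖ψ‖ ^ 2) :
    ∃ Z : Submodule ℝ V,
      (Z : Set V) = {ψ : V | ∀ φ : V, a ψ φ = 0} ∧ FiniteDimensional ℝ Z := by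
  classical
  set Z : Submodule ℝ V := ⨅ φ : V, LinearMap.ker (a.flip φ) with hZ
  have hmem : ∀ ψ : V, ψ ∈ Z ↔ ∀ φ : V, a ψ φ = 0 := by
    intro ψ
    simp [hZ, Submodule.mem_iInf, LinearMap.mem_ker, LinearMap.flip_apply]
  refine ⟨Z, by ext ψ; simpa using hmem ψ, ?_⟩
  -- each functional `ψ ↦ a ψ φ` is continuous
  have hcont : ∀ φ : V, Continuous fun ψ : V => a ψ φ := by
    intro φ
    refine AddMonoidHomClass.continuous_of_bound (a.flip φ) (c₁ * ‖φ‖) fun ψ => ?_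
    have := hbdd ψ φ
    simp only [LinearMap.flip_apply, Real.norm_eq_abs]
    nlinarith [this]
  -- `Z` is closed
  have hclosed : IsClosed (Z : Set V) := by
    have hset : (Z : Set V) = ⋂ φ : V, (fun ψ : V => a ψ φ) ⁻¹' {0} := by
      ext ψ
      simp [hmem ψ, Set.mem_iInter]
    rw [hset]
    exact isClosed_iInter fun φ => IsClosed.preimage (hcont φ) isClosed_singleton
  haveI : CompleteSpace Z := hclosed.completeSpace_coe
  -- the restriction of `ι` to `Z`
  set f : Z →L[ℝ] H := ι.comp Z.subtypeL with hf
  have hfc : IsCompactOperator f := hcompact.comp_clm Z.subtypeL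
  -- antilipschitz bound on `Z`
  set C : ℝ := Real.sqrt (max k 0 / c₂) with hC
  have hCnn : 0 ≤ C := Real.sqrt_nonneg _
  have hK : ∀ x : Z, ‖x‖ ≤ C * ‖f x‖ := by
    intro x
    have hax : a (x : V) (x : V) = 0 := (hmem (x : V)).1 x.2 (x : V)
    have h1 : c₂ * ‖(x : V)‖ ^ 2 ≤ k * ‖ι (x : V)‖ ^ 2 := by
      have := hcoercive (x : V)
      rw [hax] at this
      linarith
    have h2 : c₂ * ‖(x : V)‖ ^ 2 ≤ max k 0 * ‖ι (x : V)‖ ^ 2 := by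
      refine h1.trans ?_
      have : k ≤ max k 0 := le_max_left _ _
      nlinarith [sq_nonneg ‖ι (x : V)‖]
    have h3 : ‖(x : V)‖ ^ 2 ≤ (max k 0 / c₂) * ‖ι (x : V)‖ ^ 2 := by
      rw [div_mul_eq_mul_div, le_div_iff₀ hc₂]
      nlinarith
    have h4 : ‖(x : V)‖ ≤ C * ‖ι (x : V)‖ := by
      have := Real.sqrt_le_sqrt h3
      rwa [Real.sqrt_sq (norm_nonneg _),
        Real.sqrt_mul (by positivity) (‖ι (x : V)‖ ^ 2),
        Real.sqrt_sq (norm_nonneg _)] at this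
    simpa [hf] using h4
  have hanti : AntilipschitzWith (⟨C, hCnn⟩ : NNReal) f :=
    f.antilipschitz_of_bound fun x => hK x
  -- the closed unit ball of `Z` is totally bounded
  obtain ⟨Kc, hKc, hsub⟩ :=
    IsCompactOperator.image_closedBall_subset_compact (𝕜₁ := ℝ)
      (f := (f : Z →ₗ[ℝ] H)) hfc 1
  have htb : TotallyBounded (Metric.closedBall (0 : Z) 1) := by
    have hpre : Metric.closedBall (0 : Z) 1 ⊆ f ⁻¹' Kc := fun x hx =>
      hsub ⟨x, hx, rfl⟩
    exact (totallyBounded_preimage (hanti.isUniformInducing f.uniformContinuous)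
      hKc.totallyBounded).subset hpre
  have hcomp : IsCompact (Metric.closedBall (0 : Z) 1) :=
    TotallyBounded.isCompact_of_isClosed htb Metric.isClosed_closedBall
  exact FiniteDimensional.of_isCompact_closedBall₀ ℝ one_pos hcomp
end

section
/- Let Ω ⊆ ℝⁿ be a bounded open set, V : ℝⁿ → ℝⁿ a continuously differentiable Lipschitz vector field, and f : ℝⁿ → ℝ a continuously differentiable function with compact support. For s ∈ ℝ set T_s = Id + sV and J(s) = ∫_{T_s(Ω)} f(x) dx. Then J is differentiable at s = 0 and J′(0) = ∫_Ω (∇f(x)·V(x) + f(x) div V(x)) dx, i.e. J′(0) = ∫_Ω div(fV)(x) dx. -/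
/-!
For `‖s‖ L < 1` the map `x ↦ x + s • V x` is a Lipschitz perturbation of the identity, hence
injective, and the change of variables formula turns `J s` into
`∫ x in Ω, det (1 + s • DV x) * f (x + s • V x)`, where the determinant may be taken without
absolute value for small `s` by compactness of `DV '' closure Ω`. This integrand is
`g (s, x, V x, DV x)` for a `C¹` function `g`, so it is Lipschitz in `s` uniformly on the compact
set `closure Ω`, and one differentiates under the integral sign using
`d/ds det (1 + s • B) = trace B` at `s = 0`.
-/

open MeasureTheory Metric Filter Topology Function
open scoped NNReal

section Determinant

variable {𝕜 E : Type*} [NontriviallyNormedField 𝕜] [NormedAddCommGroup E] [NormedSpace 𝕜 E]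
  [FiniteDimensional 𝕜 E]

theorem ContinuousLinearMap.contDiff_det [CompleteSpace 𝕜] {n : WithTop ℕ∞} :
    ContDiff 𝕜 n fun B : E →L[𝕜] E => B.det := by
  classical
  let b := Module.finBasis 𝕜 E
  have hentry : ∀ i j, ContDiff 𝕜 n fun B : E →L[𝕜] E => LinearMap.toMatrix b b B i j := by
    intro i j
    simp_rw [LinearMap.toMatrix_apply]
    exact ((b.coord i).toContinuousLinearMap.comp (ContinuousLinearMap.apply 𝕜 E (b j))).contDiff
  simp_rw [ContinuousLinearMap.det, ← LinearMap.det_toMatrix b, Matrix.det_apply']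
  exact ContDiff.sum fun σ _ => contDiff_const.mul (contDiff_prod fun i _ => hentry _ _)

theorem ContinuousLinearMap.hasDerivAt_det_one_add_smul (B : E →L[𝕜] E) :
    HasDerivAt (fun s : 𝕜 => (1 + s • B).det) (LinearMap.trace 𝕜 E B) 0 := by
  classical
  let b := Module.finBasis 𝕜 E
  set M := LinearMap.toMatrix b b B
  set P := (1 + (Polynomial.X : Polynomial 𝕜) • M.map Polynomial.C).det
  have hP : ∀ s : 𝕜, (1 + s • B).det = P.eval s := fun s => by
    rw [ContinuousLinearMap.det, ← LinearMap.det_toMatrix b, ← Polynomial.coe_evalRingHom,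
      RingHom.map_det]
    congr 1
    ext i j
    by_cases h : i = j <;> simp [M, h] <;> ring
  rw [funext hP, LinearMap.trace_eq_matrix_trace 𝕜 b, ← Matrix.derivative_det_one_add_X_smul]
  exact P.hasDerivAt 0

theorem ContinuousLinearMap.continuous_trace [CompleteSpace 𝕜] :
    Continuous fun B : E →L[𝕜] E => LinearMap.trace 𝕜 E B :=
  ((LinearMap.trace 𝕜 E).comp
    (ContinuousLinearMap.coeLM 𝕜 (M := E))).continuous_of_finiteDimensional

end Determinant

theorem eventually_forall_det_one_add_smul_pos {E : Type*} [NormedAddCommGroup E]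
    [NormedSpace ℝ E] {K : Set (E →L[ℝ] E)} (hK : IsCompact K) :
    ∀ᶠ s in 𝓝 (0 : ℝ), ∀ B ∈ K, 0 < (1 + s • B).det := by
  refine hK.eventually_forall_of_forall_eventually fun B _ => ?_
  have hcont : Continuous fun p : ℝ × (E →L[ℝ] E) => (1 + p.1 • p.2).det :=
    ContinuousLinearMap.continuous_det.comp (by fun_prop)
  have h1 : 0 < (1 + (0 : ℝ) • B).det := by
    simp [ContinuousLinearMap.det, ContinuousLinearMap.one_def]
  exact hcont.continuousAt.eventually (lt_mem_nhds h1)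

theorem ContDiff.exists_lipschitzOnWith_of_isCompact {E P F : Type*}
    [NormedAddCommGroup E] [NormedSpace ℝ E] [NormedAddCommGroup P] [NormedSpace ℝ P]
    [NormedAddCommGroup F] [NormedSpace ℝ F] {g : E × P → F} (hg : ContDiff ℝ 1 g)
    {S : Set E} (hS : IsCompact S) (hS_conv : Convex ℝ S) {K : Set P} (hK : IsCompact K) :
    ∃ C : ℝ≥0, ∀ p ∈ K, LipschitzOnWith C (fun s => g (s, p)) S := by
  obtain ⟨C, hC⟩ := (hS.prod hK).exists_bound_of_continuousOn
    (hg.continuous_fderiv one_ne_zero).continuousOn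
  refine ⟨C.toNNReal, fun p hp => hS_conv.lipschitzOnWith_of_nnnorm_hasFDerivWithin_le
    (f' := fun s => (fderiv ℝ g (s, p)).comp (ContinuousLinearMap.inl ℝ E P))
    (fun s _ => ?_) fun s hs => ?_⟩
  · exact ((hg.differentiable one_ne_zero _).hasFDerivAt.comp s
      (hasFDerivAt_prodMk_left s p)).hasFDerivWithinAt
  · rw [← NNReal.coe_le_coe, coe_nnnorm]
    calc ‖(fderiv ℝ g (s, p)).comp (ContinuousLinearMap.inl ℝ E P)‖
        ≤ ‖fderiv ℝ g (s, p)‖ * ‖ContinuousLinearMap.inl ℝ E P‖ :=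
          ContinuousLinearMap.opNorm_comp_le _ _
      _ ≤ ‖fderiv ℝ g (s, p)‖ * 1 := by gcongr; exact ContinuousLinearMap.norm_inl_le_one ℝ E P
      _ ≤ C.toNNReal := by simpa using (hC _ (Set.mk_mem_prod hs hp)).trans (Real.le_coe_toNNReal C)

theorem LipschitzWith.injective_add_smul {E : Type*} [NormedAddCommGroup E] [NormedSpace ℝ E]
    {V : E → E} {L : ℝ≥0} (hV : LipschitzWith L V) {s : ℝ} (hs : ‖s‖₊ * L < 1) :
    Injective fun x => x + s • V x :=
  (AntilipschitzWith.id.add_lipschitzWith ((lipschitzWith_smul s).comp hV)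
    (by simpa using hs)).injective

theorem integral_image_add_smul {E F : Type*} [NormedAddCommGroup E] [NormedSpace ℝ E]
    [FiniteDimensional ℝ E] [MeasurableSpace E] [BorelSpace E] [NormedAddCommGroup F]
    [NormedSpace ℝ F] (μ : Measure E) [μ.IsAddHaarMeasure] {Ω : Set E} (hΩ : MeasurableSet Ω)
    {V : E → E} (hV : Differentiable ℝ V) {L : ℝ≥0} (hV_lip : LipschitzWith L V) {s : ℝ}
    (hs : ‖s‖₊ * L < 1) (f : E → F) :
    ∫ x in (fun x => x + s • V x) '' Ω, f x ∂μ =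
      ∫ x in Ω, |(1 + s • fderiv ℝ V x).det| • f (x + s • V x) ∂μ := by
  refine integral_image_eq_integral_abs_det_fderiv_smul μ hΩ (fun x _ => ?_)
    (hV_lip.injective_add_smul hs).injOn f
  rw [ContinuousLinearMap.one_def]
  exact ((hasFDerivAt_id x).fun_add ((hV x).hasFDerivAt.const_smul s)).hasFDerivWithinAt

theorem hasDerivAt_det_one_add_smul_mul_comp_add_smul {E : Type*} [NormedAddCommGroup E]
    [NormedSpace ℝ E] [FiniteDimensional ℝ E] {f : E → ℝ} {x : E} (hf : DifferentiableAt ℝ f x)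
    (v : E) (B : E →L[ℝ] E) :
    HasDerivAt (fun s : ℝ => (1 + s • B).det * f (x + s • v))
      (fderiv ℝ f x v + f x * LinearMap.trace ℝ E B) 0 := by
  have hline : HasDerivAt (fun s : ℝ => x + s • v) v 0 := by
    simpa using ((hasDerivAt_id (0 : ℝ)).smul_const v).const_add x
  have hcomp : HasDerivAt (fun s : ℝ => f (x + s • v)) (fderiv ℝ f x v) 0 :=
    hf.hasFDerivAt.comp_hasDerivAt_of_eq 0 hline (by simp)
  refine ((ContinuousLinearMap.hasDerivAt_det_one_add_smul B).fun_mul hcomp).congr_deriv ?_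
  simp [ContinuousLinearMap.det, ContinuousLinearMap.one_def, add_comm, mul_comm]

theorem integral_image_add_smul_eventuallyEq {E F : Type*} [NormedAddCommGroup E]
    [NormedSpace ℝ E] [FiniteDimensional ℝ E] [MeasurableSpace E] [BorelSpace E]
    [NormedAddCommGroup F] [NormedSpace ℝ F] (μ : Measure E) [μ.IsAddHaarMeasure] {Ω : Set E}
    (hΩ : MeasurableSet Ω) (hΩ_bdd : Bornology.IsBounded Ω) {V : E → E} (hV : ContDiff ℝ 1 V)
    {L : ℝ≥0} (hV_lip : LipschitzWith L V) (f : E → F) :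
    (fun s : ℝ => ∫ x in (fun x => x + s • V x) '' Ω, f x ∂μ) =ᶠ[𝓝 0]
      fun s => ∫ x in Ω, (1 + s • fderiv ℝ V x).det • f (x + s • V x) ∂μ := by
  have hsmall : ∀ᶠ s : ℝ in 𝓝 0, ‖s‖₊ * L < 1 := by
    have : Continuous fun s : ℝ => ‖s‖₊ * L := by fun_prop
    exact this.continuousAt.eventually (gt_mem_nhds (by simp))
  have hpos := eventually_forall_det_one_add_smul_pos
    (hΩ_bdd.isCompact_closure.image (hV.continuous_fderiv one_ne_zero))
  filter_upwards [hsmall, hpos] with s hs hs_pos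
  rw [integral_image_add_smul μ hΩ (hV.differentiable one_ne_zero) hV_lip hs]
  refine setIntegral_congr_fun hΩ fun x hx => ?_
  rw [abs_of_pos (hs_pos _ (Set.mem_image_of_mem _ (subset_closure hx)))]

theorem hasDerivAt_setIntegral_of_contDiff {X P : Type*} [TopologicalSpace X] [T2Space X]
    [MeasurableSpace X] [OpensMeasurableSpace X] [NormedAddCommGroup P] [NormedSpace ℝ P]
    (μ : Measure X) [IsFiniteMeasureOnCompacts μ] {Ω K : Set X} (hΩ : MeasurableSet Ω)
    (hK : IsCompact K) (hΩK : Ω ⊆ K) {g : ℝ × P → ℝ} (hg : ContDiff ℝ 1 g) {Φ : X → P}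
    (hΦ : Continuous Φ) {g' : X → ℝ} (hg'_meas : AEStronglyMeasurable g' (μ.restrict Ω))
    (hg' : ∀ x ∈ Ω, HasDerivAt (fun s => g (s, Φ x)) (g' x) 0) :
    HasDerivAt (fun s => ∫ x in Ω, g (s, Φ x) ∂μ) (∫ x in Ω, g' x ∂μ) 0 := by
  obtain ⟨C, hC⟩ := hg.exists_lipschitzOnWith_of_isCompact (isCompact_closedBall 0 1)
    (convex_closedBall 0 1) (hK.image hΦ)
  have hcont : ∀ s, Continuous fun x => g (s, Φ x) := fun s =>
    hg.continuous.comp (continuous_const.prodMk hΦ)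
  have : IsFiniteMeasure (μ.restrict Ω) :=
    isFiniteMeasure_restrict.2 ((measure_mono hΩK).trans_lt hK.measure_lt_top).ne
  refine (hasDerivAt_integral_of_dominated_loc_of_lip (ball_mem_nhds 0 one_pos)
    (bound := fun _ => (C : ℝ)) (.of_forall fun s => (hcont s).aestronglyMeasurable)
    (((hcont 0).continuousOn.integrableOn_compact hK).mono_set hΩK) hg'_meas ?_
    (integrable_const _) (ae_restrict_of_forall_mem hΩ hg')).2
  refine ae_restrict_of_forall_mem hΩ fun x hx => ?_
  rw [Real.nnabs_coe]
  exact (hC _ (Set.mem_image_of_mem _ (hΩK hx))).mono ball_subset_closedBall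

theorem hasDerivAt_integral_perturbed_domain_general
    {n : ℕ} (Ω : Set (EuclideanSpace ℝ (Fin n)))
    (hΩ_open : IsOpen Ω) (hΩ_bdd : Bornology.IsBounded Ω)
    (V : EuclideanSpace ℝ (Fin n) → EuclideanSpace ℝ (Fin n))
    (hV : ContDiff ℝ 1 V) (L : ℝ≥0) (hVlip : LipschitzWith L V)
    (f : EuclideanSpace ℝ (Fin n) → ℝ) (hf : ContDiff ℝ 1 f) :
    HasDerivAt (fun s : ℝ => ∫ x in (fun x => x + s • V x) '' Ω, f x)
      (∫ x in Ω, (fderiv ℝ f x (V x) +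
        f x * LinearMap.trace ℝ (EuclideanSpace ℝ (Fin n)) (fderiv ℝ V x).toLinearMap))
      0 := by
  have hg : ContDiff ℝ 1 fun q : ℝ × EuclideanSpace ℝ (Fin n) × EuclideanSpace ℝ (Fin n) ×
      (EuclideanSpace ℝ (Fin n) →L[ℝ] EuclideanSpace ℝ (Fin n)) =>
      (1 + q.1 • q.2.2.2).det * f (q.2.1 + q.1 • q.2.2.1) :=
    (ContinuousLinearMap.contDiff_det.comp (by fun_prop)).mul (hf.comp (by fun_prop))
  refine (hasDerivAt_setIntegral_of_contDiff volume hΩ_open.measurableSet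
    hΩ_bdd.isCompact_closure subset_closure hg (Φ := fun x => (x, V x, fderiv ℝ V x))
    (by fun_prop) ?_ fun x _ => hasDerivAt_det_one_add_smul_mul_comp_add_smul
      (hf.differentiable one_ne_zero x) (V x) (fderiv ℝ V x)).congr_of_eventuallyEq ?_
  · exact (((hf.continuous_fderiv one_ne_zero).clm_apply hV.continuous).add
      (hf.continuous.mul (ContinuousLinearMap.continuous_trace.comp
        (hV.continuous_fderiv one_ne_zero)))).aestronglyMeasurable
  · exact integral_image_add_smul_eventuallyEq volume
      hΩ_open.measurableSet hΩ_bdd hV hVlip f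

/-- Hadamard differentiation formula for domain integrals: for a bounded open `Ω ⊆ ℝⁿ`,
a `C¹` Lipschitz vector field `V` and a compactly supported `C¹` function `f`, the map
`s ↦ ∫_{(Id + sV)(Ω)} f` is differentiable at `s = 0` with derivative
`∫_Ω (∇f · V + f · div V) = ∫_Ω div (f V)`. -/
theorem hasDerivAt_integral_perturbed_domain
    {n : ℕ} (Ω : Set (EuclideanSpace ℝ (Fin n)))
    (hΩ_open : IsOpen Ω) (hΩ_bdd : Bornology.IsBounded Ω)
    (V : EuclideanSpace ℝ (Fin n) → EuclideanSpace ℝ (Fin n))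
    (hV : ContDiff ℝ 1 V) (L : ℝ≥0) (hVlip : LipschitzWith L V)
    (f : EuclideanSpace ℝ (Fin n) → ℝ) (hf : ContDiff ℝ 1 f)
    (hsupp : HasCompactSupport f) :
    HasDerivAt (fun s : ℝ => ∫ x in (fun x => x + s • V x) '' Ω, f x)
      (∫ x in Ω, (fderiv ℝ f x (V x) +
        f x * LinearMap.trace ℝ (EuclideanSpace ℝ (Fin n)) (fderiv ℝ V x).toLinearMap))
      0 :=
  hasDerivAt_integral_perturbed_domain_general Ω hΩ_open hΩ_bdd V hV L hVlip f hf
end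

section
/- Let φ : ℝⁿ → ℝⁿ be twice continuously differentiable with Dφ(x) invertible for every x ∈ ℝⁿ, and set M(x) = ((Dφ(x))⁻¹)ᵀ. Then for every twice continuously differentiable f : ℝⁿ → ℝ and every x ∈ ℝⁿ one has (Δf)(φ(x)) = Σ_{i,j,l=1}^{n} M_{ij}(x) ∂_j ( M_{il} ∂_l (f ∘ φ) )(x), where Δ denotes the Laplace operator and ∂_j the j-th partial derivative. -/
open Function Matrix

/-- The `j`-th partial derivative of `g : ℝⁿ → ℝ`. -/
noncomputable def partialDeriv' {n : ℕ} (j : Fin n)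
    (g : EuclideanSpace ℝ (Fin n) → ℝ) : EuclideanSpace ℝ (Fin n) → ℝ :=
  fun x => fderiv ℝ g x (EuclideanSpace.single j 1)

/-- The Laplacian `Δg = ∑ i ∂ᵢ∂ᵢ g` of `g : ℝⁿ → ℝ`. -/
noncomputable def laplacian' {n : ℕ} (g : EuclideanSpace ℝ (Fin n) → ℝ) :
    EuclideanSpace ℝ (Fin n) → ℝ :=
  fun x => ∑ i, partialDeriv' i (partialDeriv' i g) x

/-- The Jacobian matrix `(Dφ(x))_{ij} = ∂ⱼφᵢ(x)` of `φ : ℝⁿ → ℝⁿ` at `x`. -/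
noncomputable def jacobianMatrix {n : ℕ}
    (φ : EuclideanSpace ℝ (Fin n) → EuclideanSpace ℝ (Fin n))
    (x : EuclideanSpace ℝ (Fin n)) : Matrix (Fin n) (Fin n) ℝ :=
  Matrix.of fun i j => fderiv ℝ φ x (EuclideanSpace.single j 1) i

/-
Write `M(y) = ((Dφ(y))⁻¹)ᵀ`, so that in coordinates `M(y)_{il}` is the `l`-th entry of
`Dφ(y)⁻¹ eᵢ`. By the chain rule `∑ₗ M_{il}(y) ∂ₗ(g ∘ φ)(y) = Dg(φ y)(Dφ(y) Dφ(y)⁻¹ eᵢ) = (∂ᵢg)(φ y)`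
for every differentiable `g`. Applied to `g = f` at every point, this identifies the function inside
`∂ⱼ` (after summing over `l`) with `∂ᵢf ∘ φ`; applied to `g = ∂ᵢf` at `x`, it turns
`∑ⱼ M_{ij}(x) ∂ⱼ(∂ᵢf ∘ φ)(x)` into `∂ᵢ∂ᵢf(φ x)`. Exchanging `∂ⱼ` with the sum over `l` needs `M`
to be differentiable, which holds because `M` is read off `Ring.inverse ∘ Dφ`, and inversion is
differentiable on the units of the Banach algebra of operators.
-/

theorem map_ringInverse {M N F : Type*} [MonoidWithZero M] [MonoidWithZero N] [EquivLike F M N]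
    [MulEquivClass F M N] (e : F) (a : M) : e (Ring.inverse a) = Ring.inverse (e a) := by
  by_cases ha : IsUnit a
  · obtain ⟨u, rfl⟩ := ha
    have hu : e u = (u.map (e : M →* N) : N) := rfl
    rw [Ring.inverse_unit, hu, Ring.inverse_unit]
    rfl
  · rw [Ring.inverse_non_unit _ ha, Ring.inverse_non_unit _ ((isUnit_map_iff e a).not.2 ha),
      map_zero]

theorem ContDiff.differentiable_fderiv {𝕜 E F : Type*} [NontriviallyNormedField 𝕜]
    [NormedAddCommGroup E] [NormedSpace 𝕜 E] [NormedAddCommGroup F] [NormedSpace 𝕜 F] {f : E → F}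
    (hf : ContDiff 𝕜 2 f) : Differentiable 𝕜 (fderiv 𝕜 f) :=
  (hf.fderiv_right (m := 1) le_rfl).differentiable one_ne_zero

theorem Matrix.toEuclideanCLM_symm_apply {𝕜 ι : Type*} [RCLike 𝕜] [Fintype ι] [DecidableEq ι]
    (L : EuclideanSpace 𝕜 ι →L[𝕜] EuclideanSpace 𝕜 ι) (i j : ι) :
    (toEuclideanCLM (𝕜 := 𝕜)).symm L i j = L (EuclideanSpace.single j 1) i := by
  conv_rhs => rw [← StarAlgEquiv.apply_symm_apply toEuclideanCLM L]
  rw [ofLp_toEuclideanCLM, PiLp.ofLp_single, mulVec_single_one, col_apply]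

section Pullback

variable {n : ℕ}

theorem EuclideanSpace.sum_smul_single (v : EuclideanSpace ℝ (Fin n)) :
    ∑ l, v l • EuclideanSpace.single l (1 : ℝ) = v := by
  simpa using (EuclideanSpace.basisFun (Fin n) ℝ).sum_repr v

theorem differentiable_partialDeriv' {g : EuclideanSpace ℝ (Fin n) → ℝ}
    (hg : Differentiable ℝ (fderiv ℝ g)) (j : Fin n) : Differentiable ℝ (partialDeriv' j g) :=
  fun x => (hg x).clm_apply (differentiableAt_const _)

theorem partialDeriv'_fun_sum {ι : Type*} (s : Finset ι) {F : ι → EuclideanSpace ℝ (Fin n) → ℝ}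
    {x : EuclideanSpace ℝ (Fin n)} (hF : ∀ l ∈ s, DifferentiableAt ℝ (F l) x) (j : Fin n) :
    partialDeriv' j (fun y => ∑ l ∈ s, F l y) x = ∑ l ∈ s, partialDeriv' j (F l) x := by
  simp only [partialDeriv', fderiv_fun_sum hF, FunLike.coe_sum, Finset.sum_apply]

variable {φ : EuclideanSpace ℝ (Fin n) → EuclideanSpace ℝ (Fin n)}

theorem jacobianMatrix_eq_toEuclideanCLM_symm (y : EuclideanSpace ℝ (Fin n)) :
    jacobianMatrix φ y = (Matrix.toEuclideanCLM (𝕜 := ℝ)).symm (fderiv ℝ φ y) := by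
  ext i j
  rw [Matrix.toEuclideanCLM_symm_apply]
  rfl

theorem isUnit_fderiv_of_isUnit_jacobianMatrix {y : EuclideanSpace ℝ (Fin n)}
    (h : IsUnit (jacobianMatrix φ y)) : IsUnit (fderiv ℝ φ y) := by
  rw [jacobianMatrix_eq_toEuclideanCLM_symm] at h
  exact (isUnit_map_iff _ _).1 h

theorem inv_jacobianMatrix_transpose_apply (y : EuclideanSpace ℝ (Fin n)) (i l : Fin n) :
    ((jacobianMatrix φ y)⁻¹)ᵀ i l = Ring.inverse (fderiv ℝ φ y) (EuclideanSpace.single i 1) l := by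
  rw [transpose_apply, jacobianMatrix_eq_toEuclideanCLM_symm, nonsing_inv_eq_ringInverse,
    ← map_ringInverse, Matrix.toEuclideanCLM_symm_apply]

theorem differentiableAt_inv_jacobianMatrix_transpose_apply {x : EuclideanSpace ℝ (Fin n)}
    (hφ : DifferentiableAt ℝ (fderiv ℝ φ) x) (hx : IsUnit (jacobianMatrix φ x)) (i l : Fin n) :
    DifferentiableAt ℝ (fun y => ((jacobianMatrix φ y)⁻¹)ᵀ i l) x := by
  simp_rw [inv_jacobianMatrix_transpose_apply]
  have := hφ.inverse (isUnit_fderiv_of_isUnit_jacobianMatrix hx)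
  fun_prop

theorem sum_inv_jacobianMatrix_transpose_mul_partialDeriv'_comp {g : EuclideanSpace ℝ (Fin n) → ℝ}
    {y : EuclideanSpace ℝ (Fin n)} (hφ : DifferentiableAt ℝ φ y)
    (hg : DifferentiableAt ℝ g (φ y)) (hy : IsUnit (jacobianMatrix φ y)) (i : Fin n) :
    ∑ l, ((jacobianMatrix φ y)⁻¹)ᵀ i l * partialDeriv' l (g ∘ φ) y = partialDeriv' i g (φ y) := by
  set v := Ring.inverse (fderiv ℝ φ y) (EuclideanSpace.single i 1)
  calc ∑ l, ((jacobianMatrix φ y)⁻¹)ᵀ i l * partialDeriv' l (g ∘ φ) y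
      = fderiv ℝ g (φ y) (fderiv ℝ φ y (∑ l, v l • EuclideanSpace.single l 1)) := by
        simp only [inv_jacobianMatrix_transpose_apply, partialDeriv', fderiv_comp y hg hφ,
          ContinuousLinearMap.comp_apply, map_sum, map_smul, smul_eq_mul, v]
    _ = partialDeriv' i g (φ y) := by
        rw [EuclideanSpace.sum_smul_single, ← mul_apply_eq_comp,
          Ring.mul_inverse_cancel _ (isUnit_fderiv_of_isUnit_jacobianMatrix hy), one_apply_eq_self]
        rfl

end Pullback

/-- Transformation identity for the Laplacian under a `C²` map `φ` with everywhere invertible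
derivative: with `M(x) = ((Dφ(x))⁻¹)ᵀ`, one has
`(Δf)(φ(x)) = ∑_{i,j,l} M_{ij}(x) ∂ⱼ(M_{il} ∂ₗ(f ∘ φ))(x)` for every `C²` function `f`. -/
theorem laplacian_pullback_formula
    {n : ℕ} (φ : EuclideanSpace ℝ (Fin n) → EuclideanSpace ℝ (Fin n))
    (hφ : ContDiff ℝ 2 φ)
    (hinv : ∀ x, IsUnit (jacobianMatrix φ x))
    (f : EuclideanSpace ℝ (Fin n) → ℝ) (hf : ContDiff ℝ 2 f)
    (x : EuclideanSpace ℝ (Fin n)) :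
    laplacian' f (φ x) =
      ∑ i, ∑ j, ∑ l,
        ((jacobianMatrix φ x)⁻¹)ᵀ i j *
          partialDeriv' j
            (fun y => ((jacobianMatrix φ y)⁻¹)ᵀ i l * partialDeriv' l (f ∘ φ) y) x := by
  have hφ₁ : Differentiable ℝ φ := hφ.differentiable two_ne_zero
  have hf₁ : Differentiable ℝ f := hf.differentiable two_ne_zero
  have inner_sum (i : Fin n) :
      (fun y => ∑ l, ((jacobianMatrix φ y)⁻¹)ᵀ i l * partialDeriv' l (f ∘ φ) y) =
        partialDeriv' i f ∘ φ :=
    funext fun y => sum_inv_jacobianMatrix_transpose_mul_partialDeriv'_comp (hφ₁ y) (hf₁ _)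
      (hinv y) i
  have summand_diff (i l : Fin n) :
      DifferentiableAt ℝ (fun y => ((jacobianMatrix φ y)⁻¹)ᵀ i l * partialDeriv' l (f ∘ φ) y) x :=
    (differentiableAt_inv_jacobianMatrix_transpose_apply (hφ.differentiable_fderiv x) (hinv x) i
      l).mul (differentiable_partialDeriv' (hf.comp hφ).differentiable_fderiv l x)
  calc laplacian' f (φ x) = ∑ i, partialDeriv' i (partialDeriv' i f) (φ x) := rfl
    _ = ∑ i, ∑ j, ((jacobianMatrix φ x)⁻¹)ᵀ i j * partialDeriv' j (partialDeriv' i f ∘ φ) x :=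
        Finset.sum_congr rfl fun i _ =>
          (sum_inv_jacobianMatrix_transpose_mul_partialDeriv'_comp (hφ₁ x)
            (differentiable_partialDeriv' hf.differentiable_fderiv i _) (hinv x) i).symm
    _ = _ := by
        refine Finset.sum_congr rfl fun i _ => Finset.sum_congr rfl fun j _ => ?_
        rw [← Finset.mul_sum, ← partialDeriv'_fun_sum _ (fun l _ => summand_diff i l), inner_sum]
end
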